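/- For every k ≥ 1, the total number of right steps in all dispersed Dyck paths of length 2k equals twice the total number of right steps in all dispersed Dyck paths of length 2k−1; that is, R(2k) = 2·R(2k−1). -/

import Mathlib

inductive DStep | up | down | right
deriving DecidableEq, Repr

instance : Fintype DStep := ⟨{.up, .down, .right}, fun x => by cases x <;> simp⟩

/-- Run a dispersed Dyck path from height `h`; `none` if an illegal step occurs,
otherwise the final height. Down steps require positive height; right steps require height 0. -/
def DStep.run : ℕ → List DStep → Option ℕ
  | h, [] => some h
  | h, .up :: l => DStep.run (h + 1) l
  | h + 1, .down :: l => DStep.run h l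
  | 0, .down :: _ => none
  | 0, .right :: l => DStep.run 0 l
  | _ + 1, .right :: _ => none

/-- A dispersed Dyck path: starts and ends at height 0, all steps legal. -/
def IsDDP (l : List DStep) : Prop := DStep.run 0 l = some 0

instance : DecidablePred IsDDP := fun l => by unfold IsDDP; infer_instance

/-- The finset of all dispersed Dyck paths of length `n`. -/
def DDPs (n : ℕ) : Finset (List.Vector DStep n) :=
  Finset.univ.filter (fun v => IsDDP v.toList)

/-- Number of dispersed Dyck paths of length `n`. -/
def dD (n : ℕ) : ℕ := (DDPs n).card

/-- Total number of up steps over all DDPs of length `n`. -/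
def U (n : ℕ) : ℕ := ∑ v ∈ DDPs n, v.toList.count DStep.up

/-- Total number of down steps over all DDPs of length `n`. -/
def D (n : ℕ) : ℕ := ∑ v ∈ DDPs n, v.toList.count DStep.down

/-- Total number of right steps over all DDPs of length `n`. -/
def R (n : ℕ) : ℕ := ∑ v ∈ DDPs n, v.toList.count DStep.right

/-- `i` is the position of a 1-ascent in `l`: an up step with no adjacent up step. -/
def IsOneAscentAt (l : List DStep) (i : ℕ) : Prop :=
  l[i]? = some .up ∧ l[i + 1]? ≠ some .up ∧ (i = 0 ∨ l[i - 1]? ≠ some .up)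

instance (l : List DStep) : DecidablePred (IsOneAscentAt l) := fun i => by
  unfold IsOneAscentAt; infer_instance

/-- Number of 1-ascents in `l`. -/
def oneAsc (l : List DStep) : ℕ :=
  ((Finset.range l.length).filter (IsOneAscentAt l)).card

/-- Total number of 1-ascents over all DDPs of length `n`. -/
def A (n : ℕ) : ℕ := ∑ v ∈ DDPs n, oneAsc v.toList

/-- Signed final height of a plain path (ignoring any right steps). -/
def psum : List DStep → ℤ
  | [] => 0
  | .up :: l => 1 + psum l
  | .down :: l => -1 + psum l
  | .right :: l => psum l

/-!
Split a path at its first step while tracking the starting height: let `M h n` be the number of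
legal paths of length `n` from height `h` down to `0` (`pathsFrom h n`) and `W h n` their total
number of right steps. Both obey first-step recurrences, from which induction on `n` gives
`W h n = W (h + 1) n + M (h + 1) n` and, when `n + h` is odd, `M h n = M (h + 1) n`.
For odd `n` the recurrence at height `0` then reads
`R (n + 1) = W 1 n + W 0 n + M 0 n = 2 (W 1 n + M 1 n) = 2 R n`.
-/

def List.Vector.consEquiv (α : Type*) (n : ℕ) : α × List.Vector α n ≃ List.Vector α (n + 1) where
  toFun p := p.1 ::ᵥ p.2
  invFun v := (v.head, v.tail)
  left_inv p := by simp
  right_inv v := v.cons_head_tail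

theorem List.Vector.sum_univ_succ {α M : Type*} [Fintype α] [AddCommMonoid M] {n : ℕ}
    (f : List.Vector α (n + 1) → M) : ∑ v, f v = ∑ a, ∑ v : List.Vector α n, f (a ::ᵥ v) := by
  rw [← (consEquiv α n).sum_comp, Fintype.sum_prod_type]
  rfl

namespace DStep

theorem sum_univ {M : Type*} [AddCommMonoid M] (g : DStep → M) :
    ∑ a, g a = g up + g down + g right := by
  rw [show (Finset.univ : Finset DStep) = {up, down, right} from rfl,
    Finset.sum_insert (by decide), Finset.sum_insert (by decide), Finset.sum_singleton, add_assoc]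

def pathsFrom (h n : ℕ) : Finset (List.Vector DStep n) :=
  Finset.univ.filter fun v => run h v.toList = some 0

def rightStepsFrom (h n : ℕ) : ℕ :=
  ∑ v ∈ pathsFrom h n, v.toList.count right

theorem R_eq_rightStepsFrom_zero (n : ℕ) : R n = rightStepsFrom 0 n := rfl

theorem pathsFrom_succ_zero (h : ℕ) : pathsFrom (h + 1) 0 = ∅ := by
  refine Finset.filter_false_of_mem fun v _ => ?_
  rw [List.length_eq_zero_iff.mp v.toList_length]
  simp [run]

theorem rightStepsFrom_zero (h : ℕ) : rightStepsFrom h 0 = 0 :=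
  Finset.sum_eq_zero fun v _ => by simp

section FirstStep

variable {M : Type*} [AddCommMonoid M] (n : ℕ) (g : List DStep → M)

theorem sum_pathsFrom_succ (h : ℕ) :
    ∑ v ∈ pathsFrom h (n + 1), g v.toList
      = ∑ a, ∑ v ∈ Finset.univ.filter (fun v : List.Vector DStep n => run h (a :: v.toList) = some 0),
          g (a :: v.toList) := by
  simp only [pathsFrom, Finset.sum_filter, List.Vector.sum_univ_succ, List.Vector.toList_cons]

theorem sum_pathsFrom_zero_succ :
    ∑ v ∈ pathsFrom 0 (n + 1), g v.toList
      = ∑ v ∈ pathsFrom 1 n, g (up :: v.toList) + ∑ v ∈ pathsFrom 0 n, g (right :: v.toList) := by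
  rw [sum_pathsFrom_succ, sum_univ]
  simp [run]
  -- the filters left over are `pathsFrom 1 n` and `pathsFrom 0 n` up to their decidability instances
  rfl

theorem sum_pathsFrom_succ_succ (h : ℕ) :
    ∑ v ∈ pathsFrom (h + 1) (n + 1), g v.toList
      = ∑ v ∈ pathsFrom (h + 2) n, g (up :: v.toList) + ∑ v ∈ pathsFrom h n, g (down :: v.toList) := by
  rw [sum_pathsFrom_succ, sum_univ]
  simp [run]
  rfl

end FirstStep

theorem card_pathsFrom_zero_succ (n : ℕ) :
    (pathsFrom 0 (n + 1)).card = (pathsFrom 1 n).card + (pathsFrom 0 n).card := by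
  simp only [Finset.card_eq_sum_ones]
  exact sum_pathsFrom_zero_succ n fun _ => 1

theorem card_pathsFrom_succ_succ (h n : ℕ) :
    (pathsFrom (h + 1) (n + 1)).card = (pathsFrom (h + 2) n).card + (pathsFrom h n).card := by
  simp only [Finset.card_eq_sum_ones]
  exact sum_pathsFrom_succ_succ n (fun _ => 1) h

theorem rightStepsFrom_zero_succ (n : ℕ) :
    rightStepsFrom 0 (n + 1) = rightStepsFrom 1 n + rightStepsFrom 0 n + (pathsFrom 0 n).card := by
  simp [rightStepsFrom, sum_pathsFrom_zero_succ, Finset.sum_add_distrib, add_assoc]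

theorem rightStepsFrom_succ_succ (h n : ℕ) :
    rightStepsFrom (h + 1) (n + 1) = rightStepsFrom (h + 2) n + rightStepsFrom h n := by
  simp [rightStepsFrom, sum_pathsFrom_succ_succ]

theorem card_pathsFrom_eq_succ_of_odd {n h : ℕ} (hodd : Odd (n + h)) :
    (pathsFrom h n).card = (pathsFrom (h + 1) n).card := by
  induction n generalizing h with
  | zero =>
    obtain ⟨h, rfl⟩ := Nat.exists_eq_add_one.mpr (by simpa using hodd.pos)
    simp [pathsFrom_succ_zero]
  | succ n ih =>
    cases h with
    | zero =>
      rw [card_pathsFrom_zero_succ, card_pathsFrom_succ_succ, ih (by simpa using hodd)]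
    | succ h =>
      rw [card_pathsFrom_succ_succ, card_pathsFrom_succ_succ,
        ih (h := h) (by grind), ih (h := h + 2) (by grind)]

theorem rightStepsFrom_eq_succ_add_card (n h : ℕ) :
    rightStepsFrom h n = rightStepsFrom (h + 1) n + (pathsFrom (h + 1) n).card := by
  induction n generalizing h with
  | zero => simp [rightStepsFrom_zero, pathsFrom_succ_zero]
  | succ n ih =>
    cases h with
    | zero =>
      rw [rightStepsFrom_zero_succ, rightStepsFrom_succ_succ, card_pathsFrom_succ_succ, ih 0, ih 1]
      ring
    | succ h =>
      rw [rightStepsFrom_succ_succ, rightStepsFrom_succ_succ, card_pathsFrom_succ_succ,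
        ih h, ih (h + 1), ih (h + 2)]
      ring

end DStep

open DStep in
theorem R_succ_of_odd {n : ℕ} (hn : Odd n) : R (n + 1) = 2 * R n := by
  rw [R_eq_rightStepsFrom_zero, R_eq_rightStepsFrom_zero, rightStepsFrom_zero_succ,
    rightStepsFrom_eq_succ_add_card n 0, card_pathsFrom_eq_succ_of_odd (h := 0) hn]
  ring

/-- For `k ≥ 1`, the total number of right steps in all DDPs of length `2k` is twice
the total number of right steps in all DDPs of length `2k - 1`. -/
theorem right_right_recursion (k : ℕ) (hk : 1 ≤ k) : R (2 * k) = 2 * R (2 * k - 1) := by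
  have hodd : Odd (2 * k - 1) := ⟨k - 1, by omega⟩
  simpa [Nat.sub_add_cancel (by omega : 1 ≤ 2 * k)] using R_succ_of_odd hodd
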